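/- arXiv:1211.3461 — 2 statements merged into one kernel-verified Lean document; each statement's English description precedes it below -/
import Mathlib

section
/- For n ≥ 1, the orbit 𝒟(ℝ) of the diagonal tensor D under the action of G(ℝ) = GL(n,ℝ)×GL(n,ℝ)×GL(n,ℝ) is exactly the set of all n×n×n real tensors that have real tensor rank n and multilinear rank (n,n,n). -/
open scoped BigOperators
open Matrix

/-- An `n×n×n` tensor with entries in `K`. -/
abbrev Tensor (n : ℕ) (K : Type*) := Fin n × Fin n × Fin n → K

namespace Tensor

variable {n : ℕ} {K : Type*}

section CommRing
variable [CommRing K]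

/-- The right action of a triple of `n×n` matrices on an `n×n×n` tensor:
`(P(g₁,g₂,g₃))_{ijk} = Σ_{a,b,c} P_{abc} g₁(a,i) g₂(b,j) g₃(c,k)`. -/
def act (P : Tensor n K) (g₁ g₂ g₃ : Matrix (Fin n) (Fin n) K) : Tensor n K :=
  fun x => ∑ a, ∑ b, ∑ c, P (a, b, c) * g₁ a x.1 * g₂ b x.2.1 * g₃ c x.2.2

/-- The diagonal tensor `D`, with `D_{iii} = 1` and all other entries `0`. -/
def DT (n : ℕ) (K : Type*) [CommRing K] : Tensor n K :=
  fun x => if x.1 = x.2.1 ∧ x.2.1 = x.2.2 then 1 else 0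

/-- The orbit of the diagonal tensor `D` under `GL(n,K)×GL(n,K)×GL(n,K)`. -/
def orbitD (n : ℕ) (K : Type*) [CommRing K] : Set (Tensor n K) :=
  {P | ∃ g₁ g₂ g₃ : Matrix (Fin n) (Fin n) K,
    IsUnit g₁.det ∧ IsUnit g₂.det ∧ IsUnit g₃.det ∧ P = (DT n K).act g₁ g₂ g₃}

/-- `P` admits a decomposition as a sum of `r` rank-one tensors. -/
def HasRankLE (P : Tensor n K) (r : ℕ) : Prop :=
  ∃ u v w : Fin r → Fin n → K, P = fun x => ∑ l, u l x.1 * v l x.2.1 * w l x.2.2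

/-- The tensor rank of `P`: the smallest `r` such that `P` is a sum of `r` rank-one tensors. -/
noncomputable def rank (P : Tensor n K) : ℕ := sInf {r | P.HasRankLE r}

/-- The three flattenings of `P` to an `n²×n` matrix; the columns of `flatten i P` are
indexed by the `i`-th index of `P`. -/
def flatten (i : Fin 3) (P : Tensor n K) : Matrix (Fin n × Fin n) (Fin n) K :=
  ![Matrix.of fun p a => P (a, p.1, p.2),
    Matrix.of fun p b => P (p.1, b, p.2),
    Matrix.of fun p c => P (p.1, p.2, c)] i

/-- Contraction `P *_i v` of the `i`-th index of `P` against a vector `v`. -/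
def contr (i : Fin 3) (P : Tensor n K) (v : Fin n → K) : Matrix (Fin n) (Fin n) K :=
  ![Matrix.of fun j k => ∑ a, P (a, j, k) * v a,
    Matrix.of fun j k => ∑ b, P (j, b, k) * v b,
    Matrix.of fun j k => ∑ c, P (j, k, c) * v c] i

/-- The `j`-th `i`-slice of `P`, i.e. `P *_i e_j`. -/
def slice (i : Fin 3) (P : Tensor n K) (j : Fin n) : Matrix (Fin n) (Fin n) K :=
  contr i P (Pi.single j 1)

/-- The commutation relations in index `i`:
`(P*_i e_j)·adj(P*_i v)·(P*_i e_k) = (P*_i e_k)·adj(P*_i v)·(P*_i e_j)`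
for all `v` and all `j < k`. -/
def CommRel (i : Fin 3) (P : Tensor n K) : Prop :=
  ∀ (v : Fin n → K) (j k : Fin n), j < k →
    slice i P j * (contr i P v).adjugate * slice i P k
      = slice i P k * (contr i P v).adjugate * slice i P j

/-- The matrix `P *_i x`, where `x` is a vector of indeterminates. -/
noncomputable def contrX (i : Fin 3) (P : Tensor n K) :
    Matrix (Fin n) (Fin n) (MvPolynomial (Fin n) K) :=
  ![Matrix.of fun j k => ∑ a, MvPolynomial.C (P (a, j, k)) * MvPolynomial.X a,
    Matrix.of fun j k => ∑ b, MvPolynomial.C (P (j, b, k)) * MvPolynomial.X b,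
    Matrix.of fun j k => ∑ c, MvPolynomial.C (P (j, k, c)) * MvPolynomial.X c] i

/-- `h_i(P;x) = det (P *_i x)`, a polynomial in the indeterminates `x`. -/
noncomputable def hpoly (i : Fin 3) (P : Tensor n K) : MvPolynomial (Fin n) K :=
  (contrX i P).det

/-- The Hessian matrix of a polynomial in the indeterminates `x`. -/
noncomputable def hess (p : MvPolynomial (Fin n) K) :
    Matrix (Fin n) (Fin n) (MvPolynomial (Fin n) K) :=
  Matrix.of fun a b => MvPolynomial.pderiv a (MvPolynomial.pderiv b p)

/-- `f_i(P;x) = (-1)^(n-1) det (H_x (h_i(P;x)))`. -/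
noncomputable def fpoly (i : Fin 3) (P : Tensor n K) : MvPolynomial (Fin n) K :=
  (-1) ^ (n - 1) * (hess (hpoly i P)).det

/-- Substitution `x ↦ g x` in a polynomial in the indeterminates `x`. -/
noncomputable def substX (g : Matrix (Fin n) (Fin n) K) (p : MvPolynomial (Fin n) K) :
    MvPolynomial (Fin n) K :=
  MvPolynomial.aeval (fun j => ∑ k, MvPolynomial.C (g j k) * MvPolynomial.X k) p

end CommRing

/-- A complex tensor is real when all of its entries are real. -/
def IsReal (P : Tensor n ℂ) : Prop := ∀ x, (P x).im = 0

/-- The inclusion of real tensors into complex tensors. -/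
noncomputable def toC (n : ℕ) : Tensor n ℝ → Tensor n ℂ := fun P x => (P x : ℂ)

/-- The orbit `𝒟(ℝ)` of `D` under `GL(n,ℝ)³`, viewed inside the complex tensors. -/
def orbitDR (n : ℕ) : Set (Tensor n ℂ) := toC n '' orbitD n ℝ

/-- The border rank of `P`: the smallest `r` such that `P` is a limit of tensors of
rank at most `r`. -/
noncomputable def borderRank (P : Tensor n ℂ) : ℕ :=
  sInf {r | P ∈ closure {Q : Tensor n ℂ | Q.HasRankLE r}}

/-- The first nonzero entry of every row of `g` equals `1`. -/
def FirstNonzeroOne (g : Matrix (Fin n) (Fin n) ℂ) : Prop :=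
  ∀ r c : Fin n, g r c ≠ 0 → (∀ c' : Fin n, c' < c → g r c' = 0) → g r c = 1

/-- The first `2k` rows of `g` are non-real and not purely imaginary, and occur in complex
conjugate pairs (row `2j+1` conjugate to row `2j`); the remaining rows are real. -/
def ConjPairStructure (k : ℕ) (g : Matrix (Fin n) (Fin n) ℂ) : Prop :=
  (∀ m m' : Fin n, (m : ℕ) < 2 * k → Even (m : ℕ) → (m' : ℕ) = (m : ℕ) + 1 →
      ∀ c, g m' c = (starRingEnd ℂ) (g m c)) ∧
  (∀ m : Fin n, (m : ℕ) < 2 * k → (∃ c, (g m c).im ≠ 0) ∧ (∃ c, (g m c).re ≠ 0)) ∧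
  (∀ m : Fin n, 2 * k ≤ (m : ℕ) → ∀ c, (g m c).im = 0)

/-- A normalized decomposition `P = D(g₁,g₂,g₃)` exhibiting signature `(n-2k, k)`:
the first nonzero entry of every row of `g₁,g₂` is `1`, and each `gᵢ` has its first `2k`
rows non-real occurring in conjugate pairs, with the remaining rows real. -/
def SigDecomp (P : Tensor n ℂ) (k : ℕ) (g₁ g₂ g₃ : Matrix (Fin n) (Fin n) ℂ) : Prop :=
  2 * k ≤ n ∧ IsUnit g₁.det ∧ IsUnit g₂.det ∧ IsUnit g₃.det ∧
  P = (DT n ℂ).act g₁ g₂ g₃ ∧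
  FirstNonzeroOne g₁ ∧ FirstNonzeroOne g₂ ∧
  ConjPairStructure k g₁ ∧ ConjPairStructure k g₂ ∧ ConjPairStructure k g₃

/-- `P` has signature `(n-2k, k)`: its unique rank-`n` decomposition has exactly `2k`
non-real rank-one summands, occurring in conjugate pairs. -/
def HasSignature (P : Tensor n ℂ) (k : ℕ) : Prop :=
  ∃ g₁ g₂ g₃ : Matrix (Fin n) (Fin n) ℂ, SigDecomp P k g₁ g₂ g₃

/-- Cayley's hyperdeterminant of a `2×2×2` tensor. -/
noncomputable def Delta (P : Tensor 2 ℂ) : ℂ :=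
  (P (0,0,0) ^ 2 * P (1,1,1) ^ 2 + P (0,0,1) ^ 2 * P (1,1,0) ^ 2
    + P (0,1,0) ^ 2 * P (1,0,1) ^ 2 + P (0,1,1) ^ 2 * P (1,0,0) ^ 2)
  - 2 * (P (0,0,0) * P (0,0,1) * P (1,1,0) * P (1,1,1)
    + P (0,0,0) * P (0,1,0) * P (1,0,1) * P (1,1,1)
    + P (0,0,0) * P (0,1,1) * P (1,0,0) * P (1,1,1)
    + P (0,0,1) * P (0,1,0) * P (1,0,1) * P (1,1,0)
    + P (0,0,1) * P (0,1,1) * P (1,1,0) * P (1,0,0)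
    + P (0,1,0) * P (0,1,1) * P (1,0,1) * P (1,0,0))
  + 4 * (P (0,0,0) * P (0,1,1) * P (1,0,1) * P (1,1,0)
    + P (0,0,1) * P (0,1,0) * P (1,0,0) * P (1,1,1))

/-- The Levi-Civita symbol on three indices, `ε₁₂₃ = 1`. -/
noncomputable def eps (i j k : Fin 3) : ℂ :=
  if (i, j, k) = ((0 : Fin 3), (1 : Fin 3), (2 : Fin 3)) ∨ (i, j, k) = (1, 2, 0)
      ∨ (i, j, k) = (2, 0, 1) then 1
  else if (i, j, k) = ((2 : Fin 3), (1 : Fin 3), (0 : Fin 3)) ∨ (i, j, k) = (1, 0, 2)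
      ∨ (i, j, k) = (0, 2, 1) then -1
  else 0

/-- The degree-6 invariant `τ₃` of `3×3×3` tensors, given by a six-fold Levi-Civita
contraction. -/
noncomputable def tau3 (P : Tensor 3 ℂ) : ℂ :=
  ∑ i : Fin 3 × Fin 3 × Fin 3, ∑ j : Fin 3 × Fin 3 × Fin 3, ∑ k : Fin 3 × Fin 3 × Fin 3,
    ∑ l : Fin 3 × Fin 3 × Fin 3, ∑ m : Fin 3 × Fin 3 × Fin 3, ∑ o : Fin 3 × Fin 3 × Fin 3,
      P i * P j * P k * P l * P m * P o *
        eps i.1 j.1 k.1 * eps j.2.1 k.2.1 l.2.1 * eps k.2.2 l.2.2 m.2.2 *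
        eps l.1 m.1 o.1 * eps m.2.1 o.2.1 i.2.1 * eps o.2.2 i.2.2 j.2.2

end Tensor

/-!
Write a tensor as `P = ∑ₗ uₗ ⊗ vₗ ⊗ wₗ`. Each flattening of `P` factors as a Khatri–Rao matrix
times one factor matrix, so a decomposition into `r` terms bounds every flattening rank by `r`.
Hence if the tensor rank and the multilinear rank both equal `n`, a rank-`n` decomposition has
square factor matrices of full rank, i.e. `P = D(U, V, W)` with `U, V, W` invertible. Conversely,
for invertible `A, B` the Khatri–Rao matrix of `A, B` has a left inverse, so the flattenings of
`D(g₁, g₂, g₃)` have the ranks of the `gᵢ`.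
-/

namespace Tensor

variable {K : Type*} {n r : ℕ}

section CommRing

variable [CommRing K]

def ofFactors (u v w : Matrix (Fin r) (Fin n) K) : Tensor n K :=
  fun x => ∑ l, u l x.1 * v l x.2.1 * w l x.2.2

theorem DT_act (g₁ g₂ g₃ : Matrix (Fin n) (Fin n) K) :
    (DT n K).act g₁ g₂ g₃ = ofFactors g₁ g₂ g₃ := by
  funext x
  simp [act, DT, ofFactors, ite_and, ite_mul, Finset.sum_ite_eq]

theorem hasRankLE_mul_self (P : Tensor n K) : P.HasRankLE (n * n) := by
  refine ⟨fun l a => P (a, (finProdFinEquiv.symm l).1, (finProdFinEquiv.symm l).2),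
    fun l j => if (finProdFinEquiv.symm l).1 = j then 1 else 0,
    fun l k => if (finProdFinEquiv.symm l).2 = k then 1 else 0, ?_⟩
  funext x
  rw [← finProdFinEquiv.sum_comp, Fintype.sum_prod_type]
  simp [mul_ite]

theorem hasRankLE_rank (P : Tensor n K) : P.HasRankLE P.rank :=
  Nat.sInf_mem (s := {r | P.HasRankLE r}) ⟨_, hasRankLE_mul_self P⟩

def khatriRao (A B : Matrix (Fin r) (Fin n) K) : Matrix (Fin n × Fin n) (Fin r) K :=
  of fun p l => A l p.1 * B l p.2

theorem khatriRao_transpose_mul_khatriRao (A B C D : Matrix (Fin r) (Fin n) K) :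
    (khatriRao C D)ᵀ * khatriRao A B = (C * Aᵀ) ⊙ (D * Bᵀ) := by
  ext x y
  simp only [mul_apply, hadamard_apply, transpose_apply, khatriRao, of_apply,
    Fintype.sum_prod_type, Finset.sum_mul_sum]
  exact Finset.sum_congr rfl fun _ _ => Finset.sum_congr rfl fun _ _ => by ring

theorem khatriRao_leftInverse {A B : Matrix (Fin n) (Fin n) K}
    (hA : IsUnit A.det) (hB : IsUnit B.det) :
    (khatriRao A⁻¹ᵀ B⁻¹ᵀ)ᵀ * khatriRao A B = 1 := by
  rw [khatriRao_transpose_mul_khatriRao, ← transpose_mul, ← transpose_mul, mul_nonsing_inv _ hA, mul_nonsing_inv _ hB,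
    transpose_one, one_hadamard_eq_one_iff, diag_one]

theorem rank_khatriRao_mul [Nontrivial K] {A B : Matrix (Fin n) (Fin n) K}
    (hA : IsUnit A.det) (hB : IsUnit B.det) {m : Type*} [Fintype m] (M : Matrix (Fin n) m K) :
    (khatriRao A B * M).rank = M.rank := by
  refine le_antisymm (rank_mul_le_right _ _) ?_
  calc M.rank = ((khatriRao A⁻¹ᵀ B⁻¹ᵀ)ᵀ * (khatriRao A B * M)).rank := by
        rw [← Matrix.mul_assoc, khatriRao_leftInverse hA hB, Matrix.one_mul]
    _ ≤ (khatriRao A B * M).rank := rank_mul_le_right _ _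

section Flatten

variable (u v w : Matrix (Fin r) (Fin n) K)

theorem flatten_zero_ofFactors : flatten 0 (ofFactors u v w) = khatriRao v w * u := by
  ext p a
  simp [flatten, ofFactors, khatriRao, mul_apply, mul_comm, mul_left_comm]

theorem flatten_one_ofFactors : flatten 1 (ofFactors u v w) = khatriRao u w * v := by
  ext p b
  simp [flatten, ofFactors, khatriRao, mul_apply, mul_comm, mul_left_comm]

theorem flatten_two_ofFactors : flatten 2 (ofFactors u v w) = khatriRao u v * w := by
  ext p c
  simp [flatten, ofFactors, khatriRao, mul_apply, mul_comm, mul_left_comm]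

end Flatten

variable [Nontrivial K]

theorem rank_flatten_le_of_hasRankLE {P : Tensor n K} (h : P.HasRankLE r) (i : Fin 3) :
    (flatten i P).rank ≤ r := by
  obtain ⟨u, v, w, rfl⟩ := h
  have hle : ∀ M : Matrix (Fin n × Fin n) (Fin r) K, ∀ N : Matrix (Fin r) (Fin n) K,
      (M * N).rank ≤ r := fun M N => (rank_mul_le_right M N).trans (rank_le_height N)
  match i with
  | 0 => exact (flatten_zero_ofFactors u v w).symm ▸ hle _ _
  | 1 => exact (flatten_one_ofFactors u v w).symm ▸ hle _ _
  | 2 => exact (flatten_two_ofFactors u v w).symm ▸ hle _ _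

theorem rank_flatten_le_rank (P : Tensor n K) (i : Fin 3) : (flatten i P).rank ≤ P.rank :=
  rank_flatten_le_of_hasRankLE (hasRankLE_rank P) i

theorem rank_flatten_DT_act {g₁ g₂ g₃ : Matrix (Fin n) (Fin n) K}
    (h₁ : IsUnit g₁.det) (h₂ : IsUnit g₂.det) (h₃ : IsUnit g₃.det) (i : Fin 3) :
    (flatten i ((DT n K).act g₁ g₂ g₃)).rank = n := by
  have hrank : ∀ g : Matrix (Fin n) (Fin n) K, IsUnit g.det → g.rank = n := fun g hg => by
    simpa using rank_of_isUnit g ((isUnit_iff_isUnit_det g).mpr hg)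
  rw [DT_act]
  match i with
  | 0 => rw [flatten_zero_ofFactors, rank_khatriRao_mul h₂ h₃, hrank g₁ h₁]
  | 1 => rw [flatten_one_ofFactors, rank_khatriRao_mul h₁ h₃, hrank g₂ h₂]
  | 2 => rw [flatten_two_ofFactors, rank_khatriRao_mul h₁ h₂, hrank g₃ h₃]

end CommRing

section Field

variable [Field K]

theorem isUnit_det_of_rank_eq_card {m : Type*} [Fintype m] [DecidableEq m] {A : Matrix m m K}
    (h : A.rank = Fintype.card m) : IsUnit A.det := by
  have hrange : LinearMap.range A.mulVecLin = ⊤ :=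
    Submodule.eq_top_of_finrank_eq (h.trans (Module.finrank_fintype_fun_eq_card K).symm)
  exact (isUnit_iff_isUnit_det A).mp
    (mulVec_surjective_iff_isUnit.mp (LinearMap.range_eq_top.mp hrange))

theorem mem_orbitD_of_hasRankLE {P : Tensor n K} (h : P.HasRankLE n)
    (hfl : ∀ i : Fin 3, (flatten i P).rank = n) : P ∈ orbitD n K := by
  obtain ⟨u, v, w, rfl⟩ := h
  have hunit : ∀ (M : Matrix (Fin n × Fin n) (Fin n) K) (g : Matrix (Fin n) (Fin n) K),
      (M * g).rank = n → IsUnit g.det := fun M g hg =>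
    isUnit_det_of_rank_eq_card <| (Fintype.card_fin n).symm ▸
      le_antisymm (rank_le_height g) (hg.symm.trans_le (rank_mul_le_right M g))
  refine ⟨u, v, w, ?_, ?_, ?_, (DT_act _ _ _).symm⟩
  · exact hunit _ _ (flatten_zero_ofFactors u v w ▸ hfl 0)
  · exact hunit _ _ (flatten_one_ofFactors u v w ▸ hfl 1)
  · exact hunit _ _ (flatten_two_ofFactors u v w ▸ hfl 2)

theorem orbitD_eq_setOf_rank :
    orbitD n K = {P : Tensor n K | P.rank = n ∧ ∀ i : Fin 3, (flatten i P).rank = n} := by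
  ext P
  constructor
  · rintro ⟨g₁, g₂, g₃, h₁, h₂, h₃, rfl⟩
    have hfl := rank_flatten_DT_act h₁ h₂ h₃
    refine ⟨le_antisymm (Nat.sInf_le ⟨g₁, g₂, g₃, DT_act g₁ g₂ g₃⟩) ?_, hfl⟩
    exact (hfl 0).symm.trans_le (rank_flatten_le_rank _ 0)
  · rintro ⟨hrank, hfl⟩
    have hP := hasRankLE_rank P
    rw [hrank] at hP
    exact mem_orbitD_of_hasRankLE hP hfl

end Field

end Tensor

theorem statement_1_general (n : ℕ) :
    Tensor.orbitD n ℝ =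
      {P : Tensor n ℝ | Tensor.rank P = n ∧ ∀ i : Fin 3, (Tensor.flatten i P).rank = n} :=
  Tensor.orbitD_eq_setOf_rank

/-- `𝒟(ℝ)` is exactly the set of `n×n×n` real tensors of real tensor
rank `n` and multilinear rank `(n,n,n)`. -/
theorem statement_1 (n : ℕ) (hn : 1 ≤ n) :
    Tensor.orbitD n ℝ =
      {P : Tensor n ℝ | Tensor.rank P = n ∧ ∀ i : Fin 3, (Tensor.flatten i P).rank = n} :=
  statement_1_general n
end

section
/- Let n ≥ 1, let ζ be a primitive (2n−1)-th root of unity in ℂ, and for l = 1,…,2n−1 let v_l = (ζ^l, ζ^{2l}, …, ζ^{nl}) ∈ ℂⁿ. Let K_n' be the n×n×n tensor whose (i,j,k) entry is 1 if i+j+k = n+2 (indices running from 1 to n) and 0 otherwise. Then K_n' = (1/(2n−1)) Σ_{l=1}^{2n−1} ζ^{l(n−3)} v_l ⊗ v_l ⊗ v_l; in particular the complex tensor rank of K_n' is at most 2n−1. -/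
open scoped BigOperators
open Matrix

/-- The tensor `K_n'` with `(i,j,k)` entry `1` when `i+j+k = n+2` (1-based indices) and `0`
otherwise. -/
noncomputable def KnPrime (n : ℕ) : Tensor n ℂ :=
  fun x => if (x.1 : ℕ) + (x.2.1 : ℕ) + (x.2.2 : ℕ) = n - 1 then 1 else 0

/-! The entry of the right-hand side at `(i, j, k)` is, after collecting exponents, the
normalized character sum `(1/N) Σ_{l=1}^{N} ζ^{l(n+i+j+k)}` with `N = 2n-1` (0-based indices),
which is `1` if `N ∣ n+i+j+k` and `0` otherwise. Since `0 < n ≤ n+i+j+k < 2N`, divisibility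
means `n+i+j+k = N`, i.e. `i+j+k = n-1`. The identity is a sum of `N` rank-one tensors. -/

theorem IsPrimitiveRoot.sum_Icc_pow_mul {K : Type*} [Field K] {N : ℕ} {ζ : K}
    (hζ : IsPrimitiveRoot ζ N) (m : ℕ) :
    ∑ l ∈ Finset.Icc 1 N, ζ ^ (l * m) = if N ∣ m then (N : K) else 0 := by
  have hshift :
      ∑ l ∈ Finset.Icc 1 N, ζ ^ (l * m) = ζ ^ m * ∑ l ∈ Finset.range N, (ζ ^ m) ^ l := by
    rw [Finset.mul_sum, ← Finset.Ico_add_one_right_eq_Icc, Finset.sum_Ico_eq_sum_range,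
      Nat.add_sub_cancel]
    exact Finset.sum_congr rfl fun l _ => by rw [← pow_succ', ← pow_mul, mul_comm m, add_comm]
  rw [hshift]
  split_ifs with hdvd
  · simp [(hζ.pow_eq_one_iff_dvd m).mpr hdvd]
  · have hne : ζ ^ m ≠ 1 := mt (hζ.pow_eq_one_iff_dvd m).mp hdvd
    have hpow : (ζ ^ m) ^ N = 1 := by rw [← pow_mul, mul_comm, pow_mul, hζ.pow_eq_one, one_pow]
    rw [geom_sum_eq hne, hpow, sub_self, zero_div, mul_zero]

namespace Tensor

variable {n : ℕ} {K : Type*} [CommRing K]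

theorem hasRankLE_of_eq_finset_sum {ι : Type*} (s : Finset ι) (u v w : ι → Fin n → K)
    {P : Tensor n K} (hP : P = fun x => ∑ l ∈ s, u l x.1 * v l x.2.1 * w l x.2.2) :
    P.HasRankLE s.card := by
  let e := s.equivFin
  refine ⟨fun l => u (e.symm l), fun l => v (e.symm l), fun l => w (e.symm l), ?_⟩
  rw [hP]
  funext x
  rw [← Finset.sum_coe_sort s]
  exact Fintype.sum_equiv e _ _ fun l => by simp only [Equiv.symm_apply_apply]

theorem rank_le_of_hasRankLE {P : Tensor n K} {r : ℕ} (h : P.HasRankLE r) : P.rank ≤ r :=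
  Nat.sInf_le h

end Tensor

theorem two_mul_sub_one_dvd_add_add_add_iff {n i j k : ℕ} (hi : i < n) (hj : j < n) (hk : k < n) :
    2 * n - 1 ∣ n + i + j + k ↔ i + j + k = n - 1 := by
  constructor
  · intro hdvd
    have := Nat.eq_of_dvd_of_lt_two_mul (by omega) hdvd (by omega)
    omega
  · intro h
    exact ⟨1, by omega⟩

theorem KnPrime_eq_sum (n : ℕ) {ζ : ℂ} (hζ : IsPrimitiveRoot ζ (2 * n - 1)) :
    KnPrime n = fun x =>
      (1 / (2 * (n : ℂ) - 1)) * ∑ l ∈ Finset.Icc 1 (2 * n - 1),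
        ζ ^ ((l : ℤ) * ((n : ℤ) - 3)) *
          (ζ ^ (l * ((x.1 : ℕ) + 1)) * ζ ^ (l * ((x.2.1 : ℕ) + 1))
            * ζ ^ (l * ((x.2.2 : ℕ) + 1))) := by
  funext ⟨⟨i, hi⟩, ⟨j, hj⟩, ⟨k, hk⟩⟩
  have hζ0 : ζ ≠ 0 := hζ.ne_zero (by omega)
  have hN : ((2 * n - 1 : ℕ) : ℂ) = 2 * (n : ℂ) - 1 := by
    push_cast [Nat.cast_sub (by omega : 1 ≤ 2 * n)]; ring
  have hN0 : 2 * (n : ℂ) - 1 ≠ 0 := by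
    rw [← hN]; exact_mod_cast (by omega : 2 * n - 1 ≠ 0)
  have hterm (l : ℕ) : ζ ^ ((l : ℤ) * ((n : ℤ) - 3)) *
      (ζ ^ (l * (i + 1)) * ζ ^ (l * (j + 1)) * ζ ^ (l * (k + 1))) =
        ζ ^ (l * (n + i + j + k)) := by
    simp only [← zpow_natCast, ← zpow_add₀ hζ0]
    congr 1
    push_cast
    ring
  change (if i + j + k = n - 1 then (1 : ℂ) else 0) = _
  rw [Finset.sum_congr rfl fun l _ => hterm l, hζ.sum_Icc_pow_mul, hN]
  simp only [two_mul_sub_one_dvd_add_add_add_iff hi hj hk]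
  split_ifs
  · field_simp
  · rw [mul_zero]

theorem statement_18_general (n : ℕ) (ζ : ℂ) (hζ : IsPrimitiveRoot ζ (2 * n - 1)) :
    (KnPrime n = fun x =>
      (1 / (2 * (n : ℂ) - 1)) * ∑ l ∈ Finset.Icc 1 (2 * n - 1),
        ζ ^ ((l : ℤ) * ((n : ℤ) - 3)) *
          (ζ ^ (l * ((x.1 : ℕ) + 1)) * ζ ^ (l * ((x.2.1 : ℕ) + 1))
            * ζ ^ (l * ((x.2.2 : ℕ) + 1))))
    ∧ Tensor.rank (KnPrime n) ≤ 2 * n - 1 := by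
  refine ⟨KnPrime_eq_sum n hζ, Tensor.rank_le_of_hasRankLE ?_⟩
  have hcard : (Finset.Icc 1 (2 * n - 1)).card = 2 * n - 1 := by simp
  rw [← hcard]
  refine Tensor.hasRankLE_of_eq_finset_sum _
    (fun (l : ℕ) a =>
      1 / (2 * (n : ℂ) - 1) * ζ ^ ((l : ℤ) * ((n : ℤ) - 3)) * ζ ^ (l * ((a : ℕ) + 1)))
    (fun (l : ℕ) b => ζ ^ (l * ((b : ℕ) + 1))) (fun (l : ℕ) c => ζ ^ (l * ((c : ℕ) + 1))) ?_
  rw [KnPrime_eq_sum n hζ]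
  funext x
  rw [Finset.mul_sum]
  exact Finset.sum_congr rfl fun l _ => by ring

/-- for a primitive `(2n-1)`-th root of unity `ζ` and
`v_l = (ζ^l, …, ζ^{nl})`, `K_n' = (1/(2n-1)) Σ_{l=1}^{2n-1} ζ^{l(n-3)} v_l ⊗ v_l ⊗ v_l`;
in particular the rank of `K_n'` is at most `2n-1`. -/
theorem statement_18 (n : ℕ) (hn : 1 ≤ n) (ζ : ℂ) (hζ : IsPrimitiveRoot ζ (2 * n - 1)) :
    (KnPrime n = fun x =>
      (1 / (2 * (n : ℂ) - 1)) * ∑ l ∈ Finset.Icc 1 (2 * n - 1),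
        ζ ^ ((l : ℤ) * ((n : ℤ) - 3)) *
          (ζ ^ (l * ((x.1 : ℕ) + 1)) * ζ ^ (l * ((x.2.1 : ℕ) + 1))
            * ζ ^ (l * ((x.2.2 : ℕ) + 1))))
    ∧ Tensor.rank (KnPrime n) ≤ 2 * n - 1 :=
  statement_18_general n ζ hζ
end
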